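/- arXiv:2509.24829 — 4 statements merged into one kernel-verified Lean document; each statement's English description precedes it below -/
import Mathlib

section
/- Let Ω ⊂ ℝ^d be open and bounded, and suppose Ω is a Lipschitz set in the following sense: for every point p ∈ ∂Ω there exist r > 0 and a bijection l_p : B_r(p) → B_1(0) such that l_p and l_p⁻¹ are Lipschitz continuous, l_p(Ω ∩ B_r(p)) = {z ∈ B_1(0) : z_d > 0}, and l_p(∂Ω ∩ B_r(p)) = {z ∈ B_1(0) : z_d = 0}. Then Ω is uniformly locally quasiconvex, i.e., there exist constants r > 0 and L ≥ 1 such that for any x, y ∈ Ω with |y − x| ≤ r there exists a Lipschitz continuous curve γ : [0,1] → Ω with γ(0) = x, γ(1) = y and Lipschitz constant at most L·|y − x|. -/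
open MeasureTheory Set Metric

/-- A preconnected set meeting both a set and its complement meets its frontier. -/
lemma aux_preconnected_frontier {X : Type*} [TopologicalSpace X] {s Ω : Set X}
    (hs : IsPreconnected s) (h1 : (s ∩ Ω).Nonempty) (h2 : (s \ Ω).Nonempty) :
    (s ∩ frontier Ω).Nonempty := by
  by_contra hc
  rw [Set.not_nonempty_iff_eq_empty] at hc
  have hdisj : ∀ x ∈ s, x ∉ frontier Ω := by
    intro x hx hxf
    have : x ∈ s ∩ frontier Ω := ⟨hx, hxf⟩
    simp [hc] at this
  have hsub : s ⊆ interior Ω ∪ (closure Ω)ᶜ := by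
    intro x hx
    by_cases hxΩ : x ∈ closure Ω
    · left
      rcases (em (x ∈ interior Ω)) with h | h
      · exact h
      · exact absurd ⟨hxΩ, h⟩ (hdisj x hx)
    · right; exact hxΩ
  have h1' : (s ∩ interior Ω).Nonempty := by
    obtain ⟨x, hxs, hxΩ⟩ := h1
    refine ⟨x, hxs, ?_⟩
    rcases hsub hxs with h | h
    · exact h
    · exact absurd (subset_closure hxΩ) h
  have h2' : (s ∩ (closure Ω)ᶜ).Nonempty := by
    obtain ⟨x, hxs, hxΩ⟩ := h2
    refine ⟨x, hxs, ?_⟩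
    rcases hsub hxs with h | h
    · exact absurd (interior_subset h) hxΩ
    · exact h
  obtain ⟨x, _, hx1, hx2⟩ := hs (interior Ω) (closure Ω)ᶜ isOpen_interior
    (isClosed_closure.isOpen_compl) hsub h1' h2'
  exact hx2 (subset_closure (interior_subset hx1))

/-- Lemma 2.6: a bounded open Lipschitz set is uniformly locally quasiconvex. -/
theorem lipschitz_set_uniformly_locally_quasiconvex
    {d : ℕ} (hd : 0 < d) (Ω : Set (EuclideanSpace ℝ (Fin d)))
    (hΩopen : IsOpen Ω) (hΩbdd : Bornology.IsBounded Ω)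
    (hLip : ∀ p ∈ frontier Ω, ∃ r > (0 : ℝ),
      ∃ l linv : EuclideanSpace ℝ (Fin d) → EuclideanSpace ℝ (Fin d),
      ∃ K K' : NNReal,
        Set.BijOn l (closedBall p r) (closedBall 0 1) ∧
        LipschitzOnWith K l (closedBall p r) ∧
        LipschitzOnWith K' linv (closedBall 0 1) ∧
        (∀ x ∈ closedBall p r, linv (l x) = x) ∧
        (∀ y ∈ closedBall (0 : EuclideanSpace ℝ (Fin d)) 1, l (linv y) = y) ∧
        l '' (Ω ∩ closedBall p r) =
          {z ∈ closedBall (0 : EuclideanSpace ℝ (Fin d)) 1 |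
            0 < z ⟨d - 1, by omega⟩} ∧
        l '' (frontier Ω ∩ closedBall p r) =
          {z ∈ closedBall (0 : EuclideanSpace ℝ (Fin d)) 1 |
            z ⟨d - 1, by omega⟩ = 0}) :
    ∃ r > (0 : ℝ), ∃ L : ℝ, 1 ≤ L ∧
      ∀ x ∈ Ω, ∀ y ∈ Ω, dist y x ≤ r →
        ∃ γ : ℝ → EuclideanSpace ℝ (Fin d),
          γ 0 = x ∧ γ 1 = y ∧ Set.MapsTo γ (Set.Icc 0 1) Ω ∧
          ∀ s ∈ Set.Icc (0 : ℝ) 1, ∀ t ∈ Set.Icc (0 : ℝ) 1,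
            dist (γ s) (γ t) ≤ L * dist y x * |s - t| := by
  classical
  -- straight-line helper
  have straight : ∀ L : ℝ, 1 ≤ L → ∀ x y : EuclideanSpace ℝ (Fin d), segment ℝ x y ⊆ Ω →
      ∃ γ : ℝ → EuclideanSpace ℝ (Fin d),
        γ 0 = x ∧ γ 1 = y ∧ Set.MapsTo γ (Set.Icc 0 1) Ω ∧
        ∀ s ∈ Set.Icc (0 : ℝ) 1, ∀ t ∈ Set.Icc (0 : ℝ) 1,
          dist (γ s) (γ t) ≤ L * dist y x * |s - t| := by
    intro L hL x y hseg
    refine ⟨fun s => AffineMap.lineMap x y s, by simp, by simp, ?_, ?_⟩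
    · intro s hs
      apply hseg
      rw [segment_eq_image_lineMap]
      exact Set.mem_image_of_mem _ hs
    · intro s hs t ht
      rw [dist_lineMap_lineMap, Real.dist_eq, dist_comm x y]
      have h2 : |s - t| * dist y x = 1 * dist y x * |s - t| := by ring
      rw [h2]
      apply mul_le_mul_of_nonneg_right _ (abs_nonneg _)
      exact mul_le_mul_of_nonneg_right hL dist_nonneg
  by_cases hFne : (frontier Ω).Nonempty
  swap
  · -- frontier empty: segments never leave Ω
    refine ⟨1, one_pos, 1, le_refl 1, ?_⟩
    intro x hx y hy hdist
    apply straight 1 le_rfl x y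
    intro z hz
    by_contra hzΩ
    have := aux_preconnected_frontier (convex_segment x y).isPreconnected
      ⟨x, left_mem_segment ℝ x y, hx⟩ ⟨z, hz, hzΩ⟩
    rw [Set.not_nonempty_iff_eq_empty] at hFne
    rw [hFne, Set.inter_empty] at this
    exact this.ne_empty rfl
  · -- choose charts
    have hLip' : ∀ p : frontier Ω, ∃ r > (0 : ℝ),
        ∃ l linv : EuclideanSpace ℝ (Fin d) → EuclideanSpace ℝ (Fin d), ∃ K K' : NNReal,
        Set.BijOn l (closedBall (p : EuclideanSpace ℝ (Fin d)) r) (closedBall 0 1) ∧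
        LipschitzOnWith K l (closedBall (p : EuclideanSpace ℝ (Fin d)) r) ∧
        LipschitzOnWith K' linv (closedBall 0 1) ∧
        (∀ x ∈ closedBall (p : EuclideanSpace ℝ (Fin d)) r, linv (l x) = x) ∧
        (∀ y ∈ closedBall (0 : EuclideanSpace ℝ (Fin d)) 1, l (linv y) = y) ∧
        l '' (Ω ∩ closedBall (p : EuclideanSpace ℝ (Fin d)) r) =
          {z ∈ closedBall (0 : EuclideanSpace ℝ (Fin d)) 1 | 0 < z ⟨d - 1, by omega⟩} ∧
        l '' (frontier Ω ∩ closedBall (p : EuclideanSpace ℝ (Fin d)) r) =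
          {z ∈ closedBall (0 : EuclideanSpace ℝ (Fin d)) 1 | z ⟨d - 1, by omega⟩ = 0} :=
      fun p => hLip p p.2
    choose rf hrf lf linvf Kf K'f hbij hlipl hlipinv hlinvl hllinv himg hfr using hLip'
    -- compactness of the frontier
    have hFcpt : IsCompact (frontier Ω) := by
      apply Metric.isCompact_of_isClosed_isBounded isClosed_frontier
      exact (hΩbdd.closure).subset frontier_subset_closure
    have hcover : frontier Ω ⊆
        ⋃ p : frontier Ω, ball (p : EuclideanSpace ℝ (Fin d)) (rf p / 3) := by
      intro q hq
      exact Set.mem_iUnion.2 ⟨⟨q, hq⟩, mem_ball_self (by linarith [hrf ⟨q, hq⟩])⟩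
    obtain ⟨t, ht⟩ := hFcpt.elim_finite_subcover
      (fun p : frontier Ω => ball (p : EuclideanSpace ℝ (Fin d)) (rf p / 3))
      (fun p => isOpen_ball) hcover
    have htne : t.Nonempty := by
      obtain ⟨q, hq⟩ := hFne
      obtain ⟨i, hi⟩ := Set.mem_iUnion₂.1 (ht hq)
      exact ⟨i, hi.1⟩
    set δ : ℝ := t.inf' htne (fun p => rf p / 3) with hδ
    have hδpos : 0 < δ := by
      rw [hδ]
      apply Finset.lt_inf'_iff .. |>.2
      intro p _
      linarith [hrf p]
    set L : ℝ := max 1 (t.sup' htne (fun p => (Kf p : ℝ) * (K'f p : ℝ))) with hLdef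
    have hL1 : (1 : ℝ) ≤ L := le_max_left _ _
    refine ⟨δ, hδpos, L, hL1, ?_⟩
    intro x hx y hy hdist
    by_cases hseg : segment ℝ x y ⊆ Ω
    · exact straight L hL1 x y hseg
    · -- the segment meets the frontier; find a chart
      obtain ⟨z, hzseg, hzΩ⟩ := Set.not_subset.1 hseg
      obtain ⟨q, hqseg, hqF⟩ := aux_preconnected_frontier (convex_segment x y).isPreconnected
        ⟨x, left_mem_segment ℝ x y, hx⟩ ⟨z, hzseg, hzΩ⟩
      obtain ⟨i, hit, hiq⟩ := Set.mem_iUnion₂.1 (ht hqF)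
      have hδi : δ ≤ rf i / 3 := Finset.inf'_le _ hit
      -- distances
      have hqx : dist q x ≤ dist y x := by
        rw [segment_eq_image_lineMap] at hqseg
        obtain ⟨c, hc, hcq⟩ := hqseg
        rw [← hcq, dist_lineMap_left]
        have : ‖c‖ ≤ 1 := by
          rw [Real.norm_eq_abs, abs_of_nonneg hc.1]; exact hc.2
        calc ‖c‖ * dist x y ≤ 1 * dist x y :=
              mul_le_mul_of_nonneg_right this dist_nonneg
          _ = dist y x := by rw [one_mul, dist_comm]
      have hxq : dist x (i : EuclideanSpace ℝ (Fin d)) ≤ 2 * rf i / 3 := by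
        have h1 : dist q (i : EuclideanSpace ℝ (Fin d)) < rf i / 3 := mem_ball.1 hiq
        calc dist x (i : EuclideanSpace ℝ (Fin d)) ≤ dist x q
              + dist q (i : EuclideanSpace ℝ (Fin d)) := dist_triangle _ _ _
          _ ≤ dist y x + rf i / 3 := by
              rw [dist_comm x q]; exact add_le_add hqx h1.le
          _ ≤ δ + rf i / 3 := by linarith
          _ ≤ 2 * rf i / 3 := by linarith
      have hxball : x ∈ closedBall (i : EuclideanSpace ℝ (Fin d)) (rf i) := by
        rw [mem_closedBall]; linarith [hrf i]
      have hyball : y ∈ closedBall (i : EuclideanSpace ℝ (Fin d)) (rf i) := by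
        rw [mem_closedBall]
        calc dist y (i : EuclideanSpace ℝ (Fin d)) ≤ dist y x
              + dist x (i : EuclideanSpace ℝ (Fin d)) := dist_triangle _ _ _
          _ ≤ δ + 2 * rf i / 3 := add_le_add hdist hxq
          _ ≤ rf i := by linarith
      -- chart data
      have hxΩB : x ∈ Ω ∩ closedBall (i : EuclideanSpace ℝ (Fin d)) (rf i) := ⟨hx, hxball⟩
      have hyΩB : y ∈ Ω ∩ closedBall (i : EuclideanSpace ℝ (Fin d)) (rf i) := ⟨hy, hyball⟩
      have hlx : lf i x ∈ {z ∈ closedBall (0 : EuclideanSpace ℝ (Fin d)) 1 |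
          0 < z ⟨d - 1, by omega⟩} := by
        rw [← himg i]; exact Set.mem_image_of_mem _ hxΩB
      have hly : lf i y ∈ {z ∈ closedBall (0 : EuclideanSpace ℝ (Fin d)) 1 |
          0 < z ⟨d - 1, by omega⟩} := by
        rw [← himg i]; exact Set.mem_image_of_mem _ hyΩB
      -- the model set is convex
      have hconv : Convex ℝ {z ∈ closedBall (0 : EuclideanSpace ℝ (Fin d)) 1 |
          0 < z ⟨d - 1, by omega⟩} := by
        have h1 : Convex ℝ (closedBall (0 : EuclideanSpace ℝ (Fin d)) 1) :=
          convex_closedBall _ _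
        have h2 : Convex ℝ {z : EuclideanSpace ℝ (Fin d) | 0 < z ⟨d - 1, by omega⟩} := by
          refine convex_halfSpace_gt ⟨?_, ?_⟩ 0
          · intro a b; rfl
          · intro c a; rfl
        exact h1.inter h2
      have hmem : ∀ s ∈ Set.Icc (0 : ℝ) 1,
          AffineMap.lineMap (lf i x) (lf i y) s ∈
            {z ∈ closedBall (0 : EuclideanSpace ℝ (Fin d)) 1 | 0 < z ⟨d - 1, by omega⟩} := by
        intro s hs
        have : AffineMap.lineMap (lf i x) (lf i y) s ∈ segment ℝ (lf i x) (lf i y) := by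
          rw [segment_eq_image_lineMap]; exact Set.mem_image_of_mem _ hs
        exact hconv.segment_subset hlx hly this
      refine ⟨fun s => linvf i (AffineMap.lineMap (lf i x) (lf i y) s), ?_, ?_, ?_, ?_⟩
      · simp only [AffineMap.lineMap_apply_zero]
        exact hlinvl i x hxball
      · simp only [AffineMap.lineMap_apply_one]
        exact hlinvl i y hyball
      · intro s hs
        have h1 := hmem s hs
        rw [← himg i] at h1
        obtain ⟨u, hu, huz⟩ := h1
        show linvf i (AffineMap.lineMap (lf i x) (lf i y) s) ∈ Ω
        rw [← huz, hlinvl i u hu.2]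
        exact hu.1
      · intro s hs u hu
        have h1 := hmem s hs
        have h2 := hmem u hu
        have hKK : (Kf i : ℝ) * (K'f i : ℝ) ≤ L :=
          le_trans (Finset.le_sup' (fun p => (Kf p : ℝ) * (K'f p : ℝ)) hit) (le_max_right _ _)
        calc dist (linvf i (AffineMap.lineMap (lf i x) (lf i y) s))
              (linvf i (AffineMap.lineMap (lf i x) (lf i y) u))
            ≤ (K'f i : ℝ) * dist (AffineMap.lineMap (lf i x) (lf i y) s)
              (AffineMap.lineMap (lf i x) (lf i y) u) :=
              (hlipinv i).dist_le_mul _ h1.1 _ h2.1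
          _ = (K'f i : ℝ) * (dist s u * dist (lf i x) (lf i y)) := by
              rw [dist_lineMap_lineMap]
          _ ≤ (K'f i : ℝ) * (dist s u * ((Kf i : ℝ) * dist x y)) := by
              apply mul_le_mul_of_nonneg_left _ (K'f i).coe_nonneg
              exact mul_le_mul_of_nonneg_left ((hlipl i).dist_le_mul _ hxball _ hyball)
                dist_nonneg
          _ = (Kf i : ℝ) * (K'f i : ℝ) * dist y x * |s - u| := by
              rw [Real.dist_eq, dist_comm x y]; ring
          _ ≤ L * dist y x * |s - u| := by
              apply mul_le_mul_of_nonneg_right _ (abs_nonneg _)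
              exact mul_le_mul_of_nonneg_right hKK dist_nonneg
end

section
/- Let Ω ⊂ ℝ^d be a bounded measurable set, let w : Ω → ℝ be measurable with λ({x ∈ Ω : w(x) = 0}) = 0, and let (w_k) be a sequence of measurable functions w_k : Ω → ℝ with ∫_Ω |w_k − w| dλ → 0. Then ∫_Ω |sign(w_k) − sign(w)| dλ → 0, i.e., the map w ↦ sign ∘ w is continuous from L¹(Ω) to L¹(Ω) at every w whose zero set is a Lebesgue null set. -/
open MeasureTheory Filter Set Topology

lemma abs_real_sign_le_one (y : ℝ) : |Real.sign y| ≤ 1 := by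
  rcases lt_trichotomy y 0 with h | h | h
  · simp [Real.sign_of_neg h]
  · simp [h, Real.sign_zero]
  · simp [Real.sign_of_pos h]

lemma measurable_real_sign : Measurable Real.sign := by
  have : Real.sign = fun r : ℝ => if r < 0 then (-1 : ℝ) else if 0 < r then 1 else 0 := by
    funext r; rfl
  rw [this]
  exact Measurable.ite (measurableSet_lt measurable_id measurable_const)
    measurable_const
    (Measurable.ite (measurableSet_lt measurable_const measurable_id)
      measurable_const measurable_const)

lemma tendsto_sign_of_ne_zero {f : ℕ → ℝ} {a : ℝ} (ha : a ≠ 0)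
    (hf : Filter.Tendsto f atTop (𝓝 a)) :
    Filter.Tendsto (fun n => Real.sign (f n)) atTop (𝓝 (Real.sign a)) := by
  rcases ha.lt_or_gt with h | h
  · have hev : ∀ᶠ n in atTop, f n < 0 :=
      hf (Iio_mem_nhds h)
    rw [Real.sign_of_neg h]
    refine Tendsto.congr' ?_ tendsto_const_nhds
    filter_upwards [hev] with n hn
    exact (Real.sign_of_neg hn).symm
  · have hev : ∀ᶠ n in atTop, 0 < f n :=
      hf (Ioi_mem_nhds h)
    rw [Real.sign_of_pos h]
    refine Tendsto.congr' ?_ tendsto_const_nhds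
    filter_upwards [hev] with n hn
    exact (Real.sign_of_pos hn).symm

/-- Lemma 3.8: the superposition operator `w ↦ sign ∘ w` is continuous from `L¹(Ω)` to
`L¹(Ω)` at every `w` whose zero set is a Lebesgue null set. -/
theorem sign_continuous_L1
    {d : ℕ} (Ω : Set (EuclideanSpace ℝ (Fin d)))
    (hΩm : MeasurableSet Ω) (hΩbdd : Bornology.IsBounded Ω)
    (w : EuclideanSpace ℝ (Fin d) → ℝ) (hwm : Measurable w)
    (hwint : IntegrableOn w Ω)
    (hzero : volume {x ∈ Ω | w x = 0} = 0)
    (wk : ℕ → EuclideanSpace ℝ (Fin d) → ℝ)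
    (hwkm : ∀ k, Measurable (wk k))
    (hwkint : ∀ k, IntegrableOn (wk k) Ω)
    (hconv : Tendsto (fun k => ∫ x in Ω, |wk k x - w x|) atTop (𝓝 0)) :
    Tendsto (fun k => ∫ x in Ω, |Real.sign (wk k x) - Real.sign (w x)|)
      atTop (𝓝 0) := by
  set μ := volume.restrict Ω with hμ
  have hfin : μ univ < ⊤ := by
    rw [hμ, Measure.restrict_apply_univ]
    exact hΩbdd.measure_lt_top
  haveI : IsFiniteMeasure μ := ⟨hfin⟩
  -- a.e. x, w x ≠ 0
  have hwne : ∀ᵐ x ∂μ, w x ≠ 0 := by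
    rw [ae_iff]
    simp only [ne_eq, not_not]
    rw [hμ, show {a | w a = 0} = w ⁻¹' {0} from rfl,
      Measure.restrict_apply (hwm (measurableSet_singleton 0))]
    have : w ⁻¹' {0} ∩ Ω = {x ∈ Ω | w x = 0} := by ext x; simp [and_comm]
    rw [this]; exact hzero
  -- convergence in L¹ norm
  have heL : Tendsto (fun k => eLpNorm (wk k - w) 1 μ) atTop (𝓝 0) := by
    have heq : ∀ k, eLpNorm (wk k - w) 1 μ = ENNReal.ofReal (∫ x in Ω, |wk k x - w x|) := by
      intro k
      rw [eLpNorm_one_eq_lintegral_enorm,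
        ← ofReal_integral_norm_eq_lintegral_enorm ((hwkint k).sub hwint)]
      congr 1
    simp_rw [heq]
    have := (ENNReal.continuous_ofReal.tendsto 0).comp hconv
    rw [ENNReal.ofReal_zero] at this; exact this
  have hmeas : TendstoInMeasure μ wk atTop w :=
    tendstoInMeasure_of_tendsto_eLpNorm one_ne_zero
      (fun k => (hwkm k).aestronglyMeasurable) hwm.aestronglyMeasurable heL
  -- main subsequence argument
  refine tendsto_of_subseq_tendsto fun ns hns => ?_
  have hmeas' : TendstoInMeasure μ (fun n => wk (ns n)) atTop w :=
    fun ε hε => (hmeas ε hε).comp hns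
  obtain ⟨ms, _, hae⟩ := hmeas'.exists_seq_tendsto_ae
  refine ⟨ms, ?_⟩
  have key : Tendsto (fun n => ∫ x in Ω, |Real.sign (wk (ns (ms n)) x) - Real.sign (w x)|)
      atTop (𝓝 (∫ x in Ω, |Real.sign (w x) - Real.sign (w x)|)) := by
    refine tendsto_integral_of_dominated_convergence (fun _ => (2 : ℝ)) ?_ ?_ ?_ ?_
    · intro n
      exact ((measurable_real_sign.comp (hwkm (ns (ms n)))).sub
        (measurable_real_sign.comp hwm)).abs.aestronglyMeasurable
    · exact integrable_const 2
    · intro n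
      refine ae_of_all _ fun x => ?_
      rw [Real.norm_eq_abs, abs_abs]
      calc |Real.sign (wk (ns (ms n)) x) - Real.sign (w x)|
          ≤ |Real.sign (wk (ns (ms n)) x)| + |Real.sign (w x)| := abs_sub _ _
        _ ≤ 1 + 1 := add_le_add (abs_real_sign_le_one _) (abs_real_sign_le_one _)
        _ = 2 := by norm_num
    · filter_upwards [hwne, hae] with x hx hxt
      have h1 : Tendsto (fun n => Real.sign (wk (ns (ms n)) x)) atTop (𝓝 (Real.sign (w x))) :=
        tendsto_sign_of_ne_zero hx hxt
      have := (h1.sub (tendsto_const_nhds (x := Real.sign (w x)))).abs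
      simpa using this
  simpa using key
end

section
/- Let w : ℝ^d → ℝ be continuously differentiable and let K ⊂ ℝ^d be a compact set such that ∇w(x) ≠ 0 for every x ∈ K with w(x) = 0. Then H^{d−1}({x ∈ K : w(x) = 0}) < ∞. -/
open MeasureTheory Set

/-- A bounded set in `Fin m → ℝ` has finite `μH[m]` measure. -/
lemma aux_bounded_pi_hausdorff_lt_top {m : ℕ} {T : Set (Fin m → ℝ)}
    (hT : Bornology.IsBounded T) : μH[(m : ℝ)] T < ⊤ := by
  have hcard : ((m : ℝ)) = ((Fintype.card (Fin m) : ℝ)) := by simp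
  rw [hcard, hausdorffMeasure_pi_real]
  exact hT.measure_lt_top

/-- If `w : ℝ^d → ℝ` is `C¹` and `K` is compact with `∇w ≠ 0` on `{w = 0} ∩ K`, then the
zero set of `w` in `K` has finite `H^{d-1}` measure. -/
theorem zero_set_finite_hausdorff_measure
    {d : ℕ}
    (w : EuclideanSpace ℝ (Fin d) → ℝ) (hw : ContDiff ℝ 1 w)
    (K : Set (EuclideanSpace ℝ (Fin d))) (hK : IsCompact K)
    (hgrad : ∀ x ∈ K, w x = 0 → gradient w x ≠ 0) :
    μH[(d : ℝ) - 1] {x ∈ K | w x = 0} < ⊤ := by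
  rcases Nat.eq_zero_or_pos d with hd | hd
  · -- `d = 0`: the space is trivial, so the gradient is always `0` and the set is empty.
    subst hd
    have hempty : {x ∈ K | w x = 0} = ∅ := by
      ext x
      simp only [mem_setOf_eq, mem_empty_iff_false, iff_false, not_and]
      intro hxK hx0
      exact absurd (Subsingleton.elim (gradient w x) 0) (hgrad x hxK hx0)
    rw [hempty]
    simp
  · -- main case `d ≥ 1`
    set Z := {x ∈ K | w x = 0} with hZdef
    have hZK : Z ⊆ K := fun x hx => hx.1
    have hZclosed : IsClosed Z := by
      have : Z = K ∩ w ⁻¹' {0} := by ext x; simp [hZdef]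
      rw [this]
      exact hK.isClosed.inter ((isClosed_singleton).preimage hw.continuous)
    have hZc : IsCompact Z := hK.of_isClosed_subset hZclosed hZK
    have hexp0 : (0 : ℝ) ≤ (d : ℝ) - 1 := by
      have : (1 : ℝ) ≤ (d : ℝ) := by exact_mod_cast hd
      linarith
    have hexp : ((d - 1 : ℕ) : ℝ) = (d : ℝ) - 1 := by
      rw [Nat.cast_sub hd, Nat.cast_one]
    -- local finiteness around each point of `Z`
    have key : ∀ a ∈ Z, ∃ U ∈ nhds a, μH[(d : ℝ) - 1] (Z ∩ U) < ⊤ := by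
      intro a ha
      have hwa : w a = 0 := ha.2
      set f' := fderiv ℝ w a with hf'def
      have hfd : HasStrictFDerivAt w f' a := hw.hasStrictFDerivAt one_ne_zero
      have hf'ne : f' ≠ 0 := by
        intro h
        apply hgrad a ha.1 hwa
        have : gradient w a = (InnerProductSpace.toDual ℝ _).symm f' := rfl
        rw [this, h]
        simp
      have hsurj : f'.range = ⊤ := by
        obtain ⟨x, hx⟩ : ∃ x, f' x ≠ 0 := by
          by_contra h
          push_neg at h
          exact hf'ne (ContinuousLinearMap.ext fun x => by simp [h x])
        rw [LinearMap.range_eq_top]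
        intro y
        refine ⟨(y / f' x) • x, ?_⟩
        simp [div_mul_cancel₀ _ hx]
      set Φ := hfd.implicitToOpenPartialHomeomorph w f' hsurj with hΦdef
      set g : f'.ker → EuclideanSpace ℝ (Fin d) :=
        hfd.implicitFunction w f' hsurj 0 with hgdef
      have hg : HasStrictFDerivAt g (f'.ker).subtypeL 0 := by
        have := hfd.to_implicitFunction hsurj
        rwa [hwa] at this
      obtain ⟨C, s, hs, hlip⟩ := hg.exists_lipschitzOnWith
      -- eventually, points of the zero set are in the image of `g`
      have heq := hfd.eq_implicitFunction hsurj
      have hΦa : Φ a = (0, 0) := by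
        have := hfd.implicitToOpenPartialHomeomorph_self hsurj
        rw [hwa] at this
        exact this
      have hcont : ContinuousAt (fun x => (Φ x).2) a := by
        have h1 : ContinuousAt Φ a :=
          Φ.continuousAt (hfd.mem_implicitToOpenPartialHomeomorph_source hsurj)
        exact (continuous_snd.continuousAt).comp h1
      have htend : Filter.Tendsto (fun x => (Φ x).2) (nhds a) (nhds 0) := by
        have := hcont.tendsto
        rwa [hΦa] at this
      have hmem : ∀ᶠ x in nhds a, (Φ x).2 ∈ s ∩ Metric.ball 0 1 :=
        htend (Filter.inter_mem hs (Metric.ball_mem_nhds 0 one_pos))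
      obtain ⟨U, hU, hUprop⟩ := Filter.eventually_iff_exists_mem.mp (heq.and hmem)
      refine ⟨U, hU, ?_⟩
      -- `Z ∩ U ⊆ g '' (s ∩ ball 0 1)`
      have hsub : Z ∩ U ⊆ g '' (s ∩ Metric.ball 0 1) := by
        rintro x ⟨hxZ, hxU⟩
        obtain ⟨h1, h2⟩ := hUprop x hxU
        refine ⟨(Φ x).2, h2, ?_⟩
        rw [hgdef, ← hxZ.2]
        exact h1
      -- transfer via a linear equiv with `Fin (d-1) → ℝ`
      have hkerdim : Module.finrank ℝ (f'.ker) = d - 1 := by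
        have hrn := LinearMap.finrank_range_add_finrank_ker (f' : EuclideanSpace ℝ (Fin d) →ₗ[ℝ] ℝ)
        rw [show LinearMap.range (f' : EuclideanSpace ℝ (Fin d) →ₗ[ℝ] ℝ) = f'.range
          from rfl, show LinearMap.ker (f' : EuclideanSpace ℝ (Fin d) →ₗ[ℝ] ℝ) = f'.ker
          from rfl, hsurj] at hrn
        simp only [finrank_top, Module.finrank_self, finrank_euclideanSpace_fin] at hrn
        omega
      set e : f'.ker ≃L[ℝ] (Fin (d - 1) → ℝ) :=
        ContinuousLinearEquiv.ofFinrankEq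
          (by rw [hkerdim, Module.finrank_fin_fun]) with hedef
      have himg : g '' (s ∩ Metric.ball 0 1)
          = (g ∘ e.symm) '' (e '' (s ∩ Metric.ball 0 1)) := by
        rw [← image_comp]
        exact (image_congr fun x _ => by simp).symm
      have hmaps : MapsTo (⇑e.symm) (e '' (s ∩ Metric.ball 0 1)) s := by
        rintro y ⟨z, hz, rfl⟩
        simpa using hz.1
      have hlip2 := hlip.comp e.symm.lipschitz.lipschitzOnWith hmaps
      have hTb : Bornology.IsBounded (e '' (s ∩ Metric.ball 0 1)) :=
        e.lipschitz.isBounded_image (Metric.isBounded_ball.subset inter_subset_right)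
      have hTfin : μH[(d : ℝ) - 1] (e '' (s ∩ Metric.ball 0 1)) < ⊤ := by
        rw [← hexp]
        exact aux_bounded_pi_hausdorff_lt_top hTb
      calc μH[(d : ℝ) - 1] (Z ∩ U) ≤ μH[(d : ℝ) - 1] (g '' (s ∩ Metric.ball 0 1)) :=
            measure_mono hsub
        _ = μH[(d : ℝ) - 1] ((g ∘ e.symm) '' (e '' (s ∩ Metric.ball 0 1))) := by rw [himg]
        _ ≤ _ * μH[(d : ℝ) - 1] (e '' (s ∩ Metric.ball 0 1)) :=
            hlip2.hausdorffMeasure_image_le hexp0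
        _ < ⊤ := ENNReal.mul_lt_top
            (ENNReal.rpow_lt_top_of_nonneg hexp0 ENNReal.coe_ne_top) hTfin
    choose U hU hμ using key
    obtain ⟨t, ht⟩ := hZc.elim_nhds_subcover' (fun a ha => U a ha) (fun a ha => hU a ha)
    have hZcover : Z ⊆ ⋃ a ∈ t, Z ∩ U a a.2 := by
      intro x hx
      obtain ⟨a, ha, hxa⟩ := mem_iUnion₂.mp (ht hx)
      exact mem_iUnion₂.mpr ⟨a, ha, hx, hxa⟩
    calc μH[(d : ℝ) - 1] Z ≤ ∑ a ∈ t, μH[(d : ℝ) - 1] (Z ∩ U a a.2) :=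
          le_trans (measure_mono hZcover) (measure_biUnion_finset_le _ _)
      _ < ⊤ := ENNReal.sum_lt_top.mpr fun a ha => hμ a a.2
end

section
/- Let X and Y be real Banach spaces, let F : X → Y be a map, let x̄ ∈ X satisfy F(x̄) = 0, let O ⊂ X be an open neighborhood of x̄, and let G : O → L(X,Y) be a map into the bounded linear operators such that: F is Fréchet differentiable at x̄ with F'(x̄) = G(x̄); G is continuous at x̄ in operator norm; and there exists M > 0 such that for every ξ ∈ O the operator G(ξ) is bijective with ‖G(ξ)⁻¹‖ ≤ M. Then there exists an open neighborhood O' ⊂ O of x̄ such that for every x₀ ∈ O' the Newton iterates x_{k+1} := x_k − G(x_k)⁻¹ F(x_k) are well defined, remain in O', and converge superlinearly to x̄, i.e., x_k → x̄ and ‖x_{k+1} − x̄‖ / ‖x_k − x̄‖ → 0 whenever x_k ≠ x̄ for all k. -/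
open Filter Topology

/-- Abstract local superlinear convergence of Newton's method (cf. Theorems 4.4 and 4.9):
if `F(x̄) = 0`, `F` is Fréchet differentiable at `x̄` with derivative `G(x̄)`, `G` is
continuous at `x̄` in operator norm, and `G(ξ)` is boundedly invertible with uniformly
bounded inverses on a neighbourhood `O` of `x̄`, then the Newton iterates starting close
enough to `x̄` are well defined, stay in a neighbourhood and converge superlinearly. -/
theorem newton_superlinear_convergence
    {X Y : Type*} [NormedAddCommGroup X] [NormedSpace ℝ X] [CompleteSpace X]
    [NormedAddCommGroup Y] [NormedSpace ℝ Y] [CompleteSpace Y]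
    (F : X → Y) (xbar : X) (hF0 : F xbar = 0)
    (O : Set X) (hO : IsOpen O) (hxO : xbar ∈ O)
    (G : X → (X →L[ℝ] Y))
    (hdiff : HasFDerivAt F (G xbar) xbar)
    (hGcont : ContinuousAt G xbar)
    (M : ℝ) (hM : 0 < M)
    (hGinv : ∀ ξ ∈ O, ∃ Ginv : Y →L[ℝ] X,
      (∀ y, G ξ (Ginv y) = y) ∧ (∀ x, Ginv (G ξ x) = x) ∧ ‖Ginv‖ ≤ M) :
    ∃ O' ⊆ O, IsOpen O' ∧ xbar ∈ O' ∧
      ∀ x₀ ∈ O', ∀ seq : ℕ → X,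
        seq 0 = x₀ →
        (∀ k, G (seq k) (seq k - seq (k + 1)) = F (seq k)) →
        (∀ k, seq k ∈ O') ∧
        Tendsto seq atTop (𝓝 xbar) ∧
        ((∀ k, seq k ≠ xbar) →
          Tendsto (fun k => ‖seq (k + 1) - xbar‖ / ‖seq k - xbar‖) atTop (𝓝 0)) := by
  classical
  set c : ℝ := 1 / (4 * M) with hc_def
  have hc : 0 < c := by positivity
  -- the key algebraic estimate: for x ∈ O and x' a Newton step from x,
  -- ‖x' - xbar‖ ≤ M * (‖G x - G xbar‖ * ‖x - xbar‖ + ‖F x - F xbar - G xbar (x - xbar)‖)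
  have key : ∀ x ∈ O, ∀ x' : X, G x (x - x') = F x →
      ‖x' - xbar‖ ≤ M * (‖G x - G xbar‖ * ‖x - xbar‖
        + ‖F x - F xbar - G xbar (x - xbar)‖) := by
    intro x hx x' hstep
    obtain ⟨Ginv, hGi1, hGi2, hGiM⟩ := hGinv x hx
    have ekey : G x (x' - xbar) =
        (G x - G xbar) (x - xbar) - (F x - F xbar - G xbar (x - xbar)) := by
      have e : x' - xbar = (x - xbar) - (x - x') := by abel
      rw [e, map_sub, hstep]
      simp only [ContinuousLinearMap.sub_apply, hF0, sub_zero]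
      abel
    have e2 : x' - xbar = Ginv (G x (x' - xbar)) := (hGi2 _).symm
    calc ‖x' - xbar‖ = ‖Ginv (G x (x' - xbar))‖ := by rw [← e2]
      _ ≤ ‖Ginv‖ * ‖G x (x' - xbar)‖ := Ginv.le_opNorm _
      _ ≤ M * ‖G x (x' - xbar)‖ :=
          mul_le_mul_of_nonneg_right hGiM (norm_nonneg _)
      _ ≤ M * (‖G x - G xbar‖ * ‖x - xbar‖
            + ‖F x - F xbar - G xbar (x - xbar)‖) := by
          apply mul_le_mul_of_nonneg_left _ hM.le
          rw [ekey]
          refine (norm_sub_le _ _).trans (add_le_add_left ?_ _)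
          exact (G x - G xbar).le_opNorm _
  -- choose a small ball
  have h1 : ∀ᶠ x in 𝓝 xbar, ‖F x - F xbar - G xbar (x - xbar)‖ ≤ c * ‖x - xbar‖ :=
    hdiff.isLittleO.def hc
  have h2 : ∀ᶠ x in 𝓝 xbar, ‖G x - G xbar‖ ≤ c := by
    have := hGcont.eventually (Metric.closedBall_mem_nhds (G xbar) hc)
    filter_upwards [this] with x hx
    simpa [Metric.mem_closedBall, dist_eq_norm] using hx
  have h3 : ∀ᶠ x in 𝓝 xbar, x ∈ O := hO.eventually_mem hxO
  obtain ⟨r, hr0, hr⟩ := Metric.eventually_nhds_iff_ball.mp (h1.and (h2.and h3))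
  refine ⟨Metric.ball xbar r, fun x hx => (hr x hx).2.2, Metric.isOpen_ball,
    Metric.mem_ball_self hr0, ?_⟩
  intro x₀ hx₀ seq hseq0 hstep
  -- one-step contraction
  have step : ∀ x ∈ Metric.ball xbar r, ∀ x' : X, G x (x - x') = F x →
      ‖x' - xbar‖ ≤ (1/2) * ‖x - xbar‖ ∧ x' ∈ Metric.ball xbar r := by
    intro x hx x' hs
    obtain ⟨hx1, hx2, hx3⟩ := hr x hx
    have hk := key x hx3 x' hs
    have hb : ‖x' - xbar‖ ≤ (1/2) * ‖x - xbar‖ := by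
      have : M * (‖G x - G xbar‖ * ‖x - xbar‖ + ‖F x - F xbar - G xbar (x - xbar)‖)
          ≤ M * (c * ‖x - xbar‖ + c * ‖x - xbar‖) := by
        apply mul_le_mul_of_nonneg_left _ hM.le
        exact add_le_add (mul_le_mul_of_nonneg_right hx2 (norm_nonneg _)) hx1
      have hMc : M * (c * ‖x - xbar‖ + c * ‖x - xbar‖) = (1/2) * ‖x - xbar‖ := by
        rw [hc_def]; field_simp; ring
      linarith
    refine ⟨hb, ?_⟩
    have hxr : ‖x - xbar‖ < r := by
      simpa [dist_eq_norm] using hx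
    have : ‖x' - xbar‖ < r := by
      have := norm_nonneg (x - xbar)
      linarith
    simpa [Metric.mem_ball, dist_eq_norm] using this
  have hmem : ∀ k, seq k ∈ Metric.ball xbar r := by
    intro k
    induction k with
    | zero => rw [hseq0]; exact hx₀
    | succ n ih => exact (step (seq n) ih (seq (n+1)) (hstep n)).2
  have hcontr : ∀ k, ‖seq (k+1) - xbar‖ ≤ (1/2) * ‖seq k - xbar‖ :=
    fun k => (step (seq k) (hmem k) (seq (k+1)) (hstep k)).1
  have hgeo : ∀ k, ‖seq k - xbar‖ ≤ (1/2)^k * ‖seq 0 - xbar‖ := by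
    intro k
    induction k with
    | zero => simp
    | succ n ih =>
        calc ‖seq (n+1) - xbar‖ ≤ (1/2) * ‖seq n - xbar‖ := hcontr n
          _ ≤ (1/2) * ((1/2)^n * ‖seq 0 - xbar‖) := by linarith
          _ = (1/2)^(n+1) * ‖seq 0 - xbar‖ := by ring
  have htends : Tendsto seq atTop (𝓝 xbar) := by
    rw [tendsto_iff_norm_sub_tendsto_zero]
    refine squeeze_zero (fun k => norm_nonneg _) hgeo ?_
    have : Tendsto (fun k : ℕ => (1/2 : ℝ)^k) atTop (𝓝 0) :=
      tendsto_pow_atTop_nhds_zero_of_lt_one (by norm_num) (by norm_num)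
    simpa using this.mul_const ‖seq 0 - xbar‖
  refine ⟨hmem, htends, ?_⟩
  intro hne
  -- superlinear convergence
  have hpos : ∀ k, 0 < ‖seq k - xbar‖ := fun k => by
    simpa [sub_eq_zero] using (norm_pos_iff.mpr (sub_ne_zero.mpr (hne k)))
  set ψ : ℕ → ℝ := fun k =>
    ‖F (seq k) - F xbar - G xbar (seq k - xbar)‖ / ‖seq k - xbar‖ with hψ
  have hψ0 : Tendsto ψ atTop (𝓝 0) := by
    rw [Metric.tendsto_atTop]
    intro ε hε
    have hev : ∀ᶠ x in 𝓝 xbar,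
        ‖F x - F xbar - G xbar (x - xbar)‖ ≤ (ε/2) * ‖x - xbar‖ :=
      hdiff.isLittleO.def (by positivity)
    obtain ⟨N, hN⟩ := Filter.eventually_atTop.mp (htends.eventually hev)
    refine ⟨N, fun n hn => ?_⟩
    have h := hN n hn
    have hle : ψ n ≤ ε/2 := by
      rw [hψ]
      exact (div_le_iff₀ (hpos n)).mpr h
    have hnn : 0 ≤ ψ n := div_nonneg (norm_nonneg _) (norm_nonneg _)
    rw [Real.dist_eq]
    rw [abs_of_nonneg (by simpa using hnn)]
    simp only [sub_zero]
    linarith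
  have hG0 : Tendsto (fun k => ‖G (seq k) - G xbar‖) atTop (𝓝 0) := by
    have : Tendsto (fun k => G (seq k) - G xbar) atTop (𝓝 0) := by
      have := (hGcont.tendsto.comp htends).sub_const (G xbar)
      simpa using this
    simpa using this.norm
  have hbound : Tendsto (fun k => M * (‖G (seq k) - G xbar‖ + ψ k)) atTop (𝓝 0) := by
    have := (hG0.add hψ0).const_mul M
    simpa using this
  refine squeeze_zero (fun k => div_nonneg (norm_nonneg _) (norm_nonneg _))
    (fun k => ?_) hbound
  have hk := key (seq k) (hr (seq k) (hmem k)).2.2 (seq (k+1)) (hstep k)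
  rw [div_le_iff₀ (hpos k)]
  calc ‖seq (k+1) - xbar‖
      ≤ M * (‖G (seq k) - G xbar‖ * ‖seq k - xbar‖
          + ‖F (seq k) - F xbar - G xbar (seq k - xbar)‖) := hk
    _ = M * (‖G (seq k) - G xbar‖ + ψ k) * ‖seq k - xbar‖ := by
        rw [hψ]
        field_simp [(hpos k).ne']
end
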